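/- arXiv:2207.08479 — 2 statements merged into one kernel-verified Lean document; each statement's English description precedes it below -/
import Mathlib

section
/- For every α > 0, the 3×3 Jacobian matrix of partial derivatives of F evaluated at the equilibrium point K₁₋ = ((1 + α - √(α² + 10α + 1))/(2α), 0, (1-α)/α) has characteristic polynomial (X - 2/α)·(X + √(α² + 10α + 1)/α)·(X - (7α - 1 - √(α² + 10α + 1))/(2α)); equivalently its eigenvalues are 2/α, -√(α² + 10α + 1)/α, and (7α - 1 - √(α² + 10α + 1))/(2α). -/
open Polynomial

/-- The vacuum form-independent dynamical system with parameter `α`, as a map on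
`Fin 3 → ℝ` in coordinates `(u₁, u₄, q)`. -/
noncomputable def vacuumFormIndepField (α : ℝ) (p : Fin 3 → ℝ) : Fin 3 → ℝ :=
  ![p 0 * (p 0 - 2 - p 2) - 2 * p 2 + 6 * (p 1)^2 - 2,
    p 1 * (2 - p 2 + p 0),
    -2 * (p 2 - (1-α)/α) * (p 2 - (2-α)/α)]

/-- The 3×3 Jacobian matrix of partial derivatives of the vacuum
form-independent dynamical system at a point `p`. -/
noncomputable def vacuumFormIndepJacobian (α : ℝ) (p : Fin 3 → ℝ) :
    Matrix (Fin 3) (Fin 3) ℝ :=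
  Matrix.of fun i j =>
    deriv (fun s : ℝ => vacuumFormIndepField α (Function.update p j s) i) (p j)


/-! On the invariant plane `u₄ = 0` the Jacobian of the system is upper triangular, so its
eigenvalues are its diagonal entries `∂u₁'/∂u₁`, `∂u₄'/∂u₄` and `∂q'/∂q`; at `K₁₋` these
simplify to the three stated values. -/

open Matrix

theorem vacuumFormIndepJacobian_eq (α : ℝ) (p : Fin 3 → ℝ) :
    vacuumFormIndepJacobian α p =
      !![2 * p 0 - 2 - p 2, 12 * p 1, -p 0 - 2;
         p 1, 2 - p 2 + p 0, -p 1;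
         0, 0, -2 * (2 * p 2 - (1 - α) / α - (2 - α) / α)] := by
  ext i j
  fin_cases i <;> fin_cases j <;>
    simp (disch := fun_prop) [vacuumFormIndepJacobian, vacuumFormIndepField,
      Function.update_apply] <;>
    ring

theorem vacuumFormIndepJacobian_isUpperTriangular (α : ℝ) {p : Fin 3 → ℝ} (hp : p 1 = 0) :
    (vacuumFormIndepJacobian α p).IsUpperTriangular := by
  intro i j hji
  fin_cases i <;> fin_cases j <;> simp_all [vacuumFormIndepJacobian_eq]

theorem vacuumFormIndepJacobian_charpoly_of_apply_one_eq_zero (α : ℝ) {p : Fin 3 → ℝ}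
    (hp : p 1 = 0) :
    (vacuumFormIndepJacobian α p).charpoly =
      (X - C (2 * p 0 - 2 - p 2)) * (X - C (2 - p 2 + p 0)) *
        (X - C (-2 * (2 * p 2 - (1 - α) / α - (2 - α) / α))) := by
  rw [charpoly_of_isUpperTriangular _ (vacuumFormIndepJacobian_isUpperTriangular α hp),
    Fin.prod_univ_three, vacuumFormIndepJacobian_eq]
  simp

/-- For every `α > 0`, the Jacobian at the equilibrium point
`K₁₋ = ((1 + α - √(α² + 10α + 1))/(2α), 0, (1-α)/α)` has characteristic
polynomial `(X - 2/α)(X + √(α² + 10α + 1)/α)(X - (7α - 1 - √(α² + 10α + 1))/(2α))`,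
i.e. eigenvalues `2/α`, `-√(α² + 10α + 1)/α` and
`(7α - 1 - √(α² + 10α + 1))/(2α)`. -/
theorem K1_minus_jacobian_charpoly (α : ℝ) (hα : 0 < α) :
    (vacuumFormIndepJacobian α
        ![(1 + α - Real.sqrt (α^2 + 10*α + 1))/(2*α), 0, (1-α)/α]).charpoly =
      (X - C (2/α)) * (X + C (Real.sqrt (α^2 + 10*α + 1)/α)) *
        (X - C ((7*α - 1 - Real.sqrt (α^2 + 10*α + 1))/(2*α))) := by
  rw [vacuumFormIndepJacobian_charpoly_of_apply_one_eq_zero α rfl]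
  set s := Real.sqrt (α^2 + 10*α + 1)
  have hα₀ : α ≠ 0 := hα.ne'
  have h₁ : 2 * ((1 + α - s) / (2 * α)) - 2 - (1 - α) / α = -(s / α) := by
    field_simp; ring
  have h₂ : 2 - (1 - α) / α + (1 + α - s) / (2 * α) = (7 * α - 1 - s) / (2 * α) := by
    field_simp; ring
  have h₃ : -2 * (2 * ((1 - α) / α) - (1 - α) / α - (2 - α) / α) = 2 / α := by
    field_simp; ring
  simp only [cons_val_zero, cons_val_two, Nat.succ_eq_add_one, Nat.reduceAdd, tail_cons,
    head_cons]
  rw [h₁, h₂, h₃, C_neg, sub_neg_eq_add]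
  ring
end

section
/- For every 0 < α < 1, the 3×3 Jacobian matrix of partial derivatives of F evaluated at the equilibrium point K₁₊ = ((1 + α + √(α² + 10α + 1))/(2α), 0, (1-α)/α) has eigenvalues 2/α, √(α² + 10α + 1)/α, and (7α - 1 + √(α² + 10α + 1))/(2α), and all three eigenvalues are strictly positive; hence K₁₊ is a hyperbolic source (unstable node). -/
open Polynomial

lemma dquad (f : ℝ → ℝ) (a b c x : ℝ) (h : ∀ t, f t = a*t^2 + b*t + c) :
    deriv f x = 2*a*x + b := by
  have h2 : HasDerivAt (fun t : ℝ => a*t^2 + b*t + c)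
      (a * (↑2 * x ^ (2-1)) + b * 1) x :=
    (((hasDerivAt_pow 2 x).const_mul a).add ((hasDerivAt_id x).const_mul b)).add_const c
  rw [funext h, h2.deriv]; push_cast; ring

lemma jac_eq (α : ℝ) (p : Fin 3 → ℝ) :
    vacuumFormIndepJacobian α p =
    !![2 * p 0 - 2 - p 2, 12 * p 1, -(p 0) - 2;
       p 1, 2 - p 2 + p 0, -(p 1);
       0, 0, -2 * (2 * p 2 - (1-α)/α - (2-α)/α)] := by
  ext i j
  fin_cases i <;> fin_cases j <;>
    simp only [vacuumFormIndepJacobian, Matrix.of_apply]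
  · rw [dquad _ 1 (-2 - p 2) (6*(p 1)^2 - 2*(p 2) - 2) _
      (fun t => by simp [vacuumFormIndepField, Function.update]; try ring)]
    simp; ring
  · rw [dquad _ 6 0 (p 0 * (p 0 - 2 - p 2) - 2*(p 2) - 2) _
      (fun t => by simp [vacuumFormIndepField, Function.update]; try ring)]
    simp [mul_comm]
    norm_num
  · rw [dquad _ 0 (-(p 0) - 2) (p 0 * (p 0 - 2) + 6*(p 1)^2 - 2) _
      (fun t => by simp [vacuumFormIndepField, Function.update]; try ring)]
    simp
  · rw [dquad _ 0 (p 1) (p 1 * (2 - p 2)) _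
      (fun t => by simp [vacuumFormIndepField, Function.update]; try ring)]
    simp
  · rw [dquad _ 0 (2 - p 2 + p 0) 0 _
      (fun t => by simp [vacuumFormIndepField, Function.update]; try ring)]
    simp
  · rw [dquad _ 0 (-(p 1)) (p 1 * (2 + p 0)) _
      (fun t => by simp [vacuumFormIndepField, Function.update]; try ring)]
    simp
  · rw [dquad _ 0 0 (-2 * (p 2 - (1-α)/α) * (p 2 - (2-α)/α)) _
      (fun t => by simp [vacuumFormIndepField, Function.update]; try ring)]
    simp
  · rw [dquad _ 0 0 (-2 * (p 2 - (1-α)/α) * (p 2 - (2-α)/α)) _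
      (fun t => by simp [vacuumFormIndepField, Function.update]; try ring)]
    simp
  · rw [dquad _ (-2) (2*((1-α)/α + (2-α)/α)) (-2*((1-α)/α)*((2-α)/α)) _
      (fun t => by simp [vacuumFormIndepField, Function.update]; try ring)]
    simp; ring

/-- For every `0 < α < 1`, the Jacobian at the equilibrium point
`K₁₊ = ((1 + α + √(α² + 10α + 1))/(2α), 0, (1-α)/α)` has eigenvalues
`2/α`, `√(α² + 10α + 1)/α` and `(7α - 1 + √(α² + 10α + 1))/(2α)`, all strictly
positive; hence `K₁₊` is a hyperbolic source (unstable node). -/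
theorem K1_plus_jacobian_source (α : ℝ) (hα : 0 < α) (hα' : α < 1) :
    ((vacuumFormIndepJacobian α
        ![(1 + α + Real.sqrt (α^2 + 10*α + 1))/(2*α), 0, (1-α)/α]).charpoly =
      (X - C (2/α)) * (X - C (Real.sqrt (α^2 + 10*α + 1)/α)) *
        (X - C ((7*α - 1 + Real.sqrt (α^2 + 10*α + 1))/(2*α)))) ∧
    0 < 2/α ∧ 0 < Real.sqrt (α^2 + 10*α + 1)/α ∧
    0 < (7*α - 1 + Real.sqrt (α^2 + 10*α + 1))/(2*α) := by
  set s := Real.sqrt (α^2 + 10*α + 1) with hs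
  have hα0 : α ≠ 0 := ne_of_gt hα
  have hpos : (0:ℝ) ≤ α^2 + 10*α + 1 := by nlinarith
  have h1 : (1:ℝ) ≤ s := by
    nlinarith [Real.sq_sqrt hpos, Real.sqrt_nonneg (α^2 + 10*α + 1)]
  have hM : vacuumFormIndepJacobian α ![(1 + α + s)/(2*α), 0, (1-α)/α] =
      !![s/α, 0, -((1 + α + s)/(2*α)) - 2;
         0, (7*α - 1 + s)/(2*α), 0;
         0, 0, 2/α] := by
    rw [jac_eq]
    ext i j
    fin_cases i <;> fin_cases j <;> simp <;> field_simp <;> ring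
  refine ⟨?_, by positivity, by positivity, div_pos (by linarith) (by linarith)⟩
  rw [hM, Matrix.charpoly, Matrix.det_fin_three]
  simp [Matrix.charmatrix_apply_eq, Matrix.charmatrix_apply_ne, Matrix.vecHead, Matrix.vecTail]
  ring
end
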